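/- arXiv:0712.1296 — 2 statements merged into one kernel-verified Lean document; each statement's English description precedes it below -/
import Mathlib

section
/- Let K, a, b : ℝ × ℝ → ℝ be smooth functions of (θ, t) such that for every θ: ∂²a/∂t² + K·a = 0 and ∂²b/∂t² + K·b = 0, with a(θ,0) = 1, ∂a/∂t(θ,0) = 0, b(θ,0) = 0, ∂b/∂t(θ,0) = 1. Define φ := b·∂a/∂θ − a·∂b/∂θ. Then for all (θ,t): ∂φ/∂t = 2·(∂b/∂t·∂a/∂θ − ∂a/∂t·∂b/∂θ) and this also equals 2·(b·∂²a/∂θ∂t − a·∂²b/∂θ∂t). -/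
/-- Partial derivative in the second variable `t`. -/
noncomputable def partialT (f : ℝ × ℝ → ℝ) : ℝ × ℝ → ℝ :=
  fun p => deriv (fun s => f (p.1, s)) p.2

/-- Partial derivative in the first variable `θ`. -/
noncomputable def partialTheta (f : ℝ × ℝ → ℝ) : ℝ × ℝ → ℝ :=
  fun p => deriv (fun u => f (u, p.2)) p.1

section Aux

variable {f : ℝ × ℝ → ℝ}

lemma hasDerivT (hf : ContDiff ℝ (⊤ : ℕ∞) f) (θ t : ℝ) :
    HasDerivAt (fun s => f (θ, s)) (partialT f (θ, t)) t := by
  have hd : DifferentiableAt ℝ (fun s => f (θ, s)) t :=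
    (hf.comp ((contDiff_const (c := θ)).prodMk contDiff_id)).differentiable (by simp) t
  exact hd.hasDerivAt

lemma hasDerivTheta (hf : ContDiff ℝ (⊤ : ℕ∞) f) (θ t : ℝ) :
    HasDerivAt (fun u => f (u, t)) (partialTheta f (θ, t)) θ := by
  have hd : DifferentiableAt ℝ (fun u => f (u, t)) θ :=
    (hf.comp (contDiff_id.prodMk (contDiff_const (c := t)))).differentiable (by simp) θ
  exact hd.hasDerivAt

lemma partialT_eq_fderiv (hf : ContDiff ℝ (⊤ : ℕ∞) f) (p : ℝ × ℝ) :
    partialT f p = fderiv ℝ f p ((0 : ℝ), (1 : ℝ)) := by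
  have h1 : HasDerivAt (fun s : ℝ => (p.1, s)) ((0 : ℝ), (1 : ℝ)) p.2 :=
    (hasDerivAt_const p.2 p.1).prodMk (hasDerivAt_id p.2)
  have h2 : HasDerivAt (fun s => f (p.1, s)) (fderiv ℝ f p ((0 : ℝ), (1 : ℝ))) p.2 :=
    (hf.differentiable (by simp) p).hasFDerivAt.comp_hasDerivAt p.2 h1
  exact h2.deriv

lemma partialTheta_eq_fderiv (hf : ContDiff ℝ (⊤ : ℕ∞) f) (p : ℝ × ℝ) :
    partialTheta f p = fderiv ℝ f p ((1 : ℝ), (0 : ℝ)) := by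
  have h1 : HasDerivAt (fun u : ℝ => (u, p.2)) ((1 : ℝ), (0 : ℝ)) p.1 :=
    (hasDerivAt_id p.1).prodMk (hasDerivAt_const p.1 p.2)
  have h2 : HasDerivAt (fun u => f (u, p.2)) (fderiv ℝ f p ((1 : ℝ), (0 : ℝ))) p.1 :=
    (hf.differentiable (by simp) p).hasFDerivAt.comp_hasDerivAt p.1 h1
  exact h2.deriv

lemma contDiff_partialT (hf : ContDiff ℝ (⊤ : ℕ∞) f) : ContDiff ℝ (⊤ : ℕ∞) (partialT f) := by
  have h : partialT f = fun p => fderiv ℝ f p ((0 : ℝ), (1 : ℝ)) :=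
    funext (partialT_eq_fderiv hf)
  rw [h]
  exact (hf.fderiv_right (by simp)).clm_apply contDiff_const

lemma contDiff_partialTheta (hf : ContDiff ℝ (⊤ : ℕ∞) f) : ContDiff ℝ (⊤ : ℕ∞) (partialTheta f) := by
  have h : partialTheta f = fun p => fderiv ℝ f p ((1 : ℝ), (0 : ℝ)) :=
    funext (partialTheta_eq_fderiv hf)
  rw [h]
  exact (hf.fderiv_right (by simp)).clm_apply contDiff_const

lemma clairaut (hf : ContDiff ℝ (⊤ : ℕ∞) f) (p : ℝ × ℝ) :
    partialT (partialTheta f) p = partialTheta (partialT f) p := by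
  have hfd : ContDiff ℝ (⊤ : ℕ∞) (fderiv ℝ f) := hf.fderiv_right (by simp)
  have h2 : HasFDerivAt (fderiv ℝ f) (fderiv ℝ (fderiv ℝ f) p) p :=
    (hfd.differentiable (by simp) p).hasFDerivAt
  have key : ∀ v w : ℝ × ℝ,
      fderiv ℝ (fun q => fderiv ℝ f q v) p w = fderiv ℝ (fderiv ℝ f) p w v := by
    intro v w
    have h3 : HasFDerivAt (fun q => fderiv ℝ f q v)
        ((ContinuousLinearMap.apply ℝ ℝ v).comp (fderiv ℝ (fderiv ℝ f) p)) p :=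
      (ContinuousLinearMap.apply ℝ ℝ v).hasFDerivAt.comp p h2
    rw [h3.fderiv]; rfl
  have hsymm : ∀ v w : ℝ × ℝ,
      fderiv ℝ (fderiv ℝ f) p v w = fderiv ℝ (fderiv ℝ f) p w v :=
    second_derivative_symmetric
      (fun y => (hf.differentiable (by simp) y).hasFDerivAt) h2
  rw [partialT_eq_fderiv (contDiff_partialTheta hf) p,
    partialTheta_eq_fderiv (contDiff_partialT hf) p]
  have e1 : partialTheta f = fun q => fderiv ℝ f q ((1 : ℝ), (0 : ℝ)) :=
    funext (partialTheta_eq_fderiv hf)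
  have e2 : partialT f = fun q => fderiv ℝ f q ((0 : ℝ), (1 : ℝ)) :=
    funext (partialT_eq_fderiv hf)
  rw [e1, e2, key, key, hsymm]

end Aux

/-- For smooth families `a, b` of solutions of the scalar Jacobi equation
`∂²y/∂t² + K·y = 0` with initial data `a(θ,0)=1, ∂ₜa(θ,0)=0, b(θ,0)=0, ∂ₜb(θ,0)=1`,
the function `φ = b·∂_θ a − a·∂_θ b` satisfies
`∂φ/∂t = 2(∂ₜb·∂_θa − ∂ₜa·∂_θb) = 2(b·∂_θ∂ₜa − a·∂_θ∂ₜb)`. -/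
theorem partialT_phi_eq
    (K a b : ℝ × ℝ → ℝ)
    (hK : ContDiff ℝ (⊤ : ℕ∞) K) (ha : ContDiff ℝ (⊤ : ℕ∞) a) (hb : ContDiff ℝ (⊤ : ℕ∞) b)
    (hJa : ∀ p : ℝ × ℝ, partialT (partialT a) p + K p * a p = 0)
    (hJb : ∀ p : ℝ × ℝ, partialT (partialT b) p + K p * b p = 0)
    (ha0 : ∀ θ : ℝ, a (θ, 0) = 1) (ha0' : ∀ θ : ℝ, partialT a (θ, 0) = 0)
    (hb0 : ∀ θ : ℝ, b (θ, 0) = 0) (hb0' : ∀ θ : ℝ, partialT b (θ, 0) = 1)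
    (φ : ℝ × ℝ → ℝ)
    (hφ : φ = fun p => b p * partialTheta a p - a p * partialTheta b p) :
    ∀ p : ℝ × ℝ,
      partialT φ p
        = 2 * (partialT b p * partialTheta a p - partialT a p * partialTheta b p) ∧
      partialT φ p
        = 2 * (b p * partialTheta (partialT a) p - a p * partialTheta (partialT b) p) := by
  subst hφ
  have hDθa : ContDiff ℝ (⊤ : ℕ∞) (partialTheta a) := contDiff_partialTheta ha
  have hDθb : ContDiff ℝ (⊤ : ℕ∞) (partialTheta b) := contDiff_partialTheta hb
  have hDta : ContDiff ℝ (⊤ : ℕ∞) (partialT a) := contDiff_partialT ha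
  have hDtb : ContDiff ℝ (⊤ : ℕ∞) (partialT b) := contDiff_partialT hb
  have hDθDta : ContDiff ℝ (⊤ : ℕ∞) (partialTheta (partialT a)) := contDiff_partialTheta hDta
  have hDθDtb : ContDiff ℝ (⊤ : ℕ∞) (partialTheta (partialT b)) := contDiff_partialTheta hDtb
  -- θ-derivative of the Jacobi equations
  have hDθJa : ∀ p : ℝ × ℝ, partialTheta (partialT (partialT a)) p
      = -(partialTheta K p * a p + K p * partialTheta a p) := by
    intro p
    have h1 : HasDerivAt (fun u => partialT (partialT a) (u, p.2))
        (-(partialTheta K p * a p + K p * partialTheta a p)) p.1 := by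
      have h2 : HasDerivAt (fun u => -(K (u, p.2) * a (u, p.2)))
          (-(partialTheta K (p.1, p.2) * a (p.1, p.2)
            + K (p.1, p.2) * partialTheta a (p.1, p.2))) p.1 :=
        ((hasDerivTheta hK p.1 p.2).mul (hasDerivTheta ha p.1 p.2)).neg
      have h3 : (fun u => partialT (partialT a) (u, p.2))
          = fun u => -(K (u, p.2) * a (u, p.2)) := by
        funext u; linarith [hJa (u, p.2)]
      rw [h3]
      exact h2
    exact h1.deriv
  have hDθJb : ∀ p : ℝ × ℝ, partialTheta (partialT (partialT b)) p
      = -(partialTheta K p * b p + K p * partialTheta b p) := by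
    intro p
    have h1 : HasDerivAt (fun u => partialT (partialT b) (u, p.2))
        (-(partialTheta K p * b p + K p * partialTheta b p)) p.1 := by
      have h2 : HasDerivAt (fun u => -(K (u, p.2) * b (u, p.2)))
          (-(partialTheta K (p.1, p.2) * b (p.1, p.2)
            + K (p.1, p.2) * partialTheta b (p.1, p.2))) p.1 :=
        ((hasDerivTheta hK p.1 p.2).mul (hasDerivTheta hb p.1 p.2)).neg
      have h3 : (fun u => partialT (partialT b) (u, p.2))
          = fun u => -(K (u, p.2) * b (u, p.2)) := by
        funext u; linarith [hJb (u, p.2)]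
      rw [h3]
      exact h2
    exact h1.deriv
  -- initial values of the θ-derivatives
  have hθa0 : ∀ θ : ℝ, partialTheta a (θ, 0) = 0 := by
    intro θ
    show deriv (fun u => a (u, 0)) θ = 0
    have h : (fun u => a (u, (0 : ℝ))) = fun _ => (1 : ℝ) := funext ha0
    rw [h, deriv_const]
  have hθb0 : ∀ θ : ℝ, partialTheta b (θ, 0) = 0 := by
    intro θ
    show deriv (fun u => b (u, 0)) θ = 0
    have h : (fun u => b (u, (0 : ℝ))) = fun _ => (0 : ℝ) := funext hb0
    rw [h, deriv_const]
  have hθa0' : ∀ θ : ℝ, partialTheta (partialT a) (θ, 0) = 0 := by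
    intro θ
    show deriv (fun u => partialT a (u, 0)) θ = 0
    have h : (fun u => partialT a (u, (0 : ℝ))) = fun _ => (0 : ℝ) := funext ha0'
    rw [h, deriv_const]
  have hθb0' : ∀ θ : ℝ, partialTheta (partialT b) (θ, 0) = 0 := by
    intro θ
    show deriv (fun u => partialT b (u, 0)) θ = 0
    have h : (fun u => partialT b (u, (0 : ℝ))) = fun _ => (1 : ℝ) := funext hb0'
    rw [h, deriv_const]
  -- the Wronskian-like identity
  have hW : ∀ p : ℝ × ℝ,
      b p * partialTheta (partialT a) p - a p * partialTheta (partialT b) p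
        = partialT b p * partialTheta a p - partialT a p * partialTheta b p := by
    rintro ⟨θ, t⟩
    set g : ℝ → ℝ := fun s =>
      (b (θ, s) * partialTheta (partialT a) (θ, s)
        - a (θ, s) * partialTheta (partialT b) (θ, s))
      - (partialT b (θ, s) * partialTheta a (θ, s)
        - partialT a (θ, s) * partialTheta b (θ, s)) with hg_def
    have hg : ∀ s : ℝ, HasDerivAt g 0 s := by
      intro s
      have H : HasDerivAt g
          (((partialT b (θ, s) * partialTheta (partialT a) (θ, s)
              + b (θ, s) * partialT (partialTheta (partialT a)) (θ, s))
            - (partialT a (θ, s) * partialTheta (partialT b) (θ, s)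
              + a (θ, s) * partialT (partialTheta (partialT b)) (θ, s)))
          - ((partialT (partialT b) (θ, s) * partialTheta a (θ, s)
              + partialT b (θ, s) * partialT (partialTheta a) (θ, s))
            - (partialT (partialT a) (θ, s) * partialTheta b (θ, s)
              + partialT a (θ, s) * partialT (partialTheta b) (θ, s)))) s :=
        (((hasDerivT hb θ s).mul (hasDerivT hDθDta θ s)).sub
          ((hasDerivT ha θ s).mul (hasDerivT hDθDtb θ s))).sub
          (((hasDerivT (contDiff_partialT hb) θ s).mul (hasDerivT hDθa θ s)).sub
            (((hasDerivT (contDiff_partialT ha) θ s).mul (hasDerivT hDθb θ s))))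
      have e1 : partialT (partialTheta (partialT a)) (θ, s)
          = -(partialTheta K (θ, s) * a (θ, s) + K (θ, s) * partialTheta a (θ, s)) := by
        rw [clairaut hDta (θ, s), hDθJa (θ, s)]
      have e2 : partialT (partialTheta (partialT b)) (θ, s)
          = -(partialTheta K (θ, s) * b (θ, s) + K (θ, s) * partialTheta b (θ, s)) := by
        rw [clairaut hDtb (θ, s), hDθJb (θ, s)]
      have e3 : partialT (partialT a) (θ, s) = -(K (θ, s) * a (θ, s)) := by
        linarith [hJa (θ, s)]
      have e4 : partialT (partialT b) (θ, s) = -(K (θ, s) * b (θ, s)) := by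
        linarith [hJb (θ, s)]
      have e5 : partialT (partialTheta a) (θ, s) = partialTheta (partialT a) (θ, s) :=
        clairaut ha (θ, s)
      have e6 : partialT (partialTheta b) (θ, s) = partialTheta (partialT b) (θ, s) :=
        clairaut hb (θ, s)
      rw [e1, e2, e3, e4, e5, e6] at H
      have : -(partialTheta K (θ, s) * a (θ, s) + K (θ, s) * partialTheta a (θ, s)) * b (θ, s)
          = -(partialTheta K (θ, s) * a (θ, s) + K (θ, s) * partialTheta a (θ, s)) * b (θ, s) := rfl
      convert H using 1
      ring
    have hconst : g t = g 0 :=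
      is_const_of_deriv_eq_zero (fun s => (hg s).differentiableAt)
        (fun s => (hg s).deriv) t 0
    have hzero : g 0 = 0 := by
      simp only [hg_def, ha0 θ, hb0 θ, ha0' θ, hb0' θ, hθa0 θ, hθb0 θ, hθa0' θ, hθb0' θ]
      ring
    have := hconst.trans hzero
    simp only [hg_def] at this
    linarith
  -- compute ∂ₜφ
  rintro ⟨θ, t⟩
  have Hφ : HasDerivAt
      (fun s => b (θ, s) * partialTheta a (θ, s) - a (θ, s) * partialTheta b (θ, s))
      ((partialT b (θ, t) * partialTheta a (θ, t)
          + b (θ, t) * partialT (partialTheta a) (θ, t))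
        - (partialT a (θ, t) * partialTheta b (θ, t)
          + a (θ, t) * partialT (partialTheta b) (θ, t))) t :=
    ((hasDerivT hb θ t).mul (hasDerivT hDθa θ t)).sub
      ((hasDerivT ha θ t).mul (hasDerivT hDθb θ t))
  have hDφ : partialT (fun q => b q * partialTheta a q - a q * partialTheta b q) (θ, t)
      = (partialT b (θ, t) * partialTheta a (θ, t)
          + b (θ, t) * partialT (partialTheta a) (θ, t))
        - (partialT a (θ, t) * partialTheta b (θ, t)
          + a (θ, t) * partialT (partialTheta b) (θ, t)) := Hφ.deriv
  rw [hDφ, clairaut ha (θ, t), clairaut hb (θ, t)]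
  have hWp := hW (θ, t)
  constructor
  · linarith
  · linarith
end

section
/- Let T > 0, κ ≥ 0, M ≥ 0. Let K : [0,T] → ℝ be continuously differentiable with |K(t)| ≤ κ and |K'(t)| ≤ κ on [0,T], let g : [0,T] → ℝ be continuous with |g(t)| ≤ M on [0,T], and let φ : [0,T] → ℝ be three times continuously differentiable satisfying φ''' + 4·K·φ' + 2·K'·φ = −2·g on [0,T] with φ(0) = φ'(0) = φ''(0) = 0. Then there exists a constant C > 0, depending only on T and κ (and not on M, g, or φ), such that |φ'(t)| ≤ C·t·M and |φ''(t)| ≤ C·t·M for all t ∈ [0,T]. -/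
/-!
Write `v = (φ, φ', φ'')`. Solving the equation for `φ'''` shows that `v` solves a linear
first-order system whose coefficients are bounded by `1 + 6κ`, forced by `-2g` with
`‖-2g‖ ≤ 2M`. Since `v(0) = 0`, Grönwall's inequality gives
`‖v(t)‖ ≤ 2M/L · (e^{Lt} - 1) ≤ 2M t e^{Lt}` for `L = 1 + 6κ`, so `C = 2e^{LT}` works.
-/

open Set Real

theorem Real.exp_sub_one_le_mul_exp (x : ℝ) : exp x - 1 ≤ x * exp x := by
  have h := mul_le_mul_of_nonneg_right (one_sub_le_exp_neg x) (exp_pos x).le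
  rw [← exp_add, neg_add_cancel, exp_zero] at h
  linarith

theorem gronwallBound_zero_le_mul_exp {K ε : ℝ} (hK : 0 ≤ K) (hε : 0 ≤ ε) (x : ℝ) :
    gronwallBound 0 K ε x ≤ ε * x * exp (K * x) := by
  rcases hK.eq_or_lt with rfl | hK
  · simp [gronwallBound_K0]
  · simp only [gronwallBound_of_K_ne_0 hK.ne', zero_mul, zero_add]
    calc ε / K * (exp (K * x) - 1) ≤ ε / K * (K * x * exp (K * x)) := by
          gcongr
          exact exp_sub_one_le_mul_exp _
      _ = ε * x * exp (K * x) := by field_simp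

theorem norm_le_mul_exp_of_norm_deriv_right_le {E : Type*} [NormedAddCommGroup E]
    [NormedSpace ℝ E] {f f' : ℝ → E} {K ε a b : ℝ} (hK : 0 ≤ K) (hε : 0 ≤ ε)
    (hf : ContinuousOn f (Icc a b)) (hf' : ∀ x ∈ Ico a b, HasDerivWithinAt f (f' x) (Ici x) x)
    (ha : f a = 0) (bound : ∀ x ∈ Ico a b, ‖f' x‖ ≤ K * ‖f x‖ + ε) :
    ∀ x ∈ Icc a b, ‖f x‖ ≤ ε * (x - a) * exp (K * (x - a)) := fun x hx =>
  (norm_le_gronwallBound_of_norm_deriv_right_le hf hf' (by simp [ha]) bound x hx).trans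
    (gronwallBound_zero_le_mul_exp hK hε _)

noncomputable def jet2 (φ : ℝ → ℝ) (t : ℝ) : ℝ × ℝ × ℝ :=
  (φ t, deriv φ t, deriv (deriv φ) t)

section Jet

variable {φ : ℝ → ℝ} {t : ℝ}

theorem norm_jet2 : ‖jet2 φ t‖ = max |φ t| (max |deriv φ t| |deriv (deriv φ) t|) := by
  simp [jet2, Prod.norm_def, Real.norm_eq_abs]

theorem abs_le_norm_jet2 : |φ t| ≤ ‖jet2 φ t‖ :=
  norm_jet2.symm ▸ le_max_left _ _

theorem abs_deriv_le_norm_jet2 : |deriv φ t| ≤ ‖jet2 φ t‖ :=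
  norm_jet2.symm ▸ (le_max_left _ _).trans (le_max_right _ _)

theorem abs_deriv_deriv_le_norm_jet2 : |deriv (deriv φ) t| ≤ ‖jet2 φ t‖ :=
  norm_jet2.symm ▸ (le_max_right _ _).trans (le_max_right _ _)

theorem hasDerivAt_jet2 (hφ : ContDiff ℝ 3 φ) (t : ℝ) :
    HasDerivAt (jet2 φ) (jet2 (deriv φ) t) t := by
  have hφ' : ContDiff ℝ 2 (deriv φ) := (contDiff_succ_iff_deriv.mp hφ).2.2
  have hφ'' : ContDiff ℝ 1 (deriv (deriv φ)) := (contDiff_succ_iff_deriv.mp hφ').2.2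
  exact (hφ.differentiable (by norm_num)).differentiableAt.hasDerivAt.prodMk
    ((hφ'.differentiable (by norm_num)).differentiableAt.hasDerivAt.prodMk
      (hφ''.differentiable (by norm_num)).differentiableAt.hasDerivAt)

end Jet

section ThirdOrderODE

variable {K g φ : ℝ → ℝ} {κ M x : ℝ}

theorem abs_third_deriv_le_of_ode (hK : |K x| ≤ κ) (hK' : |deriv K x| ≤ κ) (hg : |g x| ≤ M)
    (hode : deriv (deriv (deriv φ)) x + 4 * K x * deriv φ x + 2 * deriv K x * φ x = -2 * g x) :
    |deriv (deriv (deriv φ)) x| ≤ 6 * κ * ‖jet2 φ x‖ + 2 * M := by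
  have hκ : 0 ≤ κ := (abs_nonneg _).trans hK
  have h₁ : |K x| * |deriv φ x| ≤ κ * ‖jet2 φ x‖ :=
    mul_le_mul hK abs_deriv_le_norm_jet2 (abs_nonneg _) hκ
  have h₂ : |deriv K x| * |φ x| ≤ κ * ‖jet2 φ x‖ :=
    mul_le_mul hK' abs_le_norm_jet2 (abs_nonneg _) hκ
  rw [show deriv (deriv (deriv φ)) x = -2 * g x + -4 * (K x * deriv φ x) + -2 * (deriv K x * φ x)
    by linarith]
  refine (abs_add_three _ _ _).trans ?_
  simp only [abs_mul, abs_neg, abs_two, show |(4 : ℝ)| = 4 by norm_num]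
  linarith

theorem norm_jet2_deriv_le_of_ode (hK : |K x| ≤ κ) (hK' : |deriv K x| ≤ κ) (hg : |g x| ≤ M)
    (hode : deriv (deriv (deriv φ)) x + 4 * K x * deriv φ x + 2 * deriv K x * φ x = -2 * g x) :
    ‖jet2 (deriv φ) x‖ ≤ (1 + 6 * κ) * ‖jet2 φ x‖ + 2 * M := by
  have hκ : 0 ≤ κ := (abs_nonneg _).trans hK
  have hM : 0 ≤ M := (abs_nonneg _).trans hg
  have hv : ‖jet2 φ x‖ ≤ (1 + 6 * κ) * ‖jet2 φ x‖ + 2 * M := by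
    linarith [mul_nonneg hκ (norm_nonneg (jet2 φ x))]
  rw [norm_jet2]
  refine max_le (abs_deriv_le_norm_jet2.trans hv)
    (max_le (abs_deriv_deriv_le_norm_jet2.trans hv) ?_)
  linarith [abs_third_deriv_le_of_ode hK hK' hg hode, norm_nonneg (jet2 φ x)]

end ThirdOrderODE

theorem deriv_phi_bound_of_third_order_ode_general
    (T κ : ℝ) (hκ : 0 ≤ κ) :
    ∃ C : ℝ, 0 < C ∧
      ∀ (M : ℝ), 0 ≤ M →
      ∀ (K g φ : ℝ → ℝ),
        ContDiff ℝ 1 K →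
        (∀ t ∈ Icc (0 : ℝ) T, |K t| ≤ κ) →
        (∀ t ∈ Icc (0 : ℝ) T, |deriv K t| ≤ κ) →
        ContinuousOn g (Icc 0 T) →
        (∀ t ∈ Icc (0 : ℝ) T, |g t| ≤ M) →
        ContDiff ℝ 3 φ →
        (∀ t ∈ Icc (0 : ℝ) T,
          deriv (deriv (deriv φ)) t + 4 * K t * deriv φ t + 2 * deriv K t * φ t
            = -2 * g t) →
        φ 0 = 0 → deriv φ 0 = 0 → deriv (deriv φ) 0 = 0 →
        ∀ t ∈ Icc (0 : ℝ) T,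
          |deriv φ t| ≤ C * t * M ∧ |deriv (deriv φ) t| ≤ C * t * M := by
  set L := 1 + 6 * κ
  refine ⟨2 * exp (L * T), by positivity, ?_⟩
  intro M hM K g φ _ hK hK' _ hg hφ hode h₀ h₁ h₂ t ht
  have hv₀ : jet2 φ 0 = 0 := by simp [jet2, h₀, h₁, h₂]
  have hbound : ∀ s ∈ Ico (0 : ℝ) T, ‖jet2 (deriv φ) s‖ ≤ L * ‖jet2 φ s‖ + 2 * M := by
    intro s hs
    replace hs := Ico_subset_Icc_self hs
    exact norm_jet2_deriv_le_of_ode (hK s hs) (hK' s hs) (hg s hs) (hode s hs)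
  have hgronwall : ‖jet2 φ t‖ ≤ 2 * M * t * exp (L * t) := by
    simpa using norm_le_mul_exp_of_norm_deriv_right_le (by positivity) (by positivity)
      (fun s _ => (hasDerivAt_jet2 hφ s).continuousAt.continuousWithinAt)
      (fun s _ => (hasDerivAt_jet2 hφ s).hasDerivWithinAt) hv₀ hbound t ht
  have hv : ‖jet2 φ t‖ ≤ 2 * exp (L * T) * t * M := by
    have : exp (L * t) ≤ exp (L * T) := exp_le_exp.mpr (by gcongr; exact ht.2)
    nlinarith [mul_nonneg hM ht.1]
  exact ⟨abs_deriv_le_norm_jet2.trans hv, abs_deriv_deriv_le_norm_jet2.trans hv⟩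

/-- Bounds on the first and second derivatives of the solution, with triple zero initial
data, of the third-order linear ODE `φ''' + 4Kφ' + 2K'φ = −2g`: there is a constant
`C > 0` depending only on `T` and `κ` such that `|φ'(t)| ≤ C·t·M` and
`|φ''(t)| ≤ C·t·M` on `[0,T]`. -/
theorem deriv_phi_bound_of_third_order_ode
    (T κ : ℝ) (hT : 0 < T) (hκ : 0 ≤ κ) :
    ∃ C : ℝ, 0 < C ∧
      ∀ (M : ℝ), 0 ≤ M →
      ∀ (K g φ : ℝ → ℝ),
        ContDiff ℝ 1 K →
        (∀ t ∈ Icc (0 : ℝ) T, |K t| ≤ κ) →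
        (∀ t ∈ Icc (0 : ℝ) T, |deriv K t| ≤ κ) →
        ContinuousOn g (Icc 0 T) →
        (∀ t ∈ Icc (0 : ℝ) T, |g t| ≤ M) →
        ContDiff ℝ 3 φ →
        (∀ t ∈ Icc (0 : ℝ) T,
          deriv (deriv (deriv φ)) t + 4 * K t * deriv φ t + 2 * deriv K t * φ t
            = -2 * g t) →
        φ 0 = 0 → deriv φ 0 = 0 → deriv (deriv φ) 0 = 0 →
        ∀ t ∈ Icc (0 : ℝ) T,
          |deriv φ t| ≤ C * t * M ∧ |deriv (deriv φ) t| ≤ C * t * M :=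
  deriv_phi_bound_of_third_order_ode_general T κ hκ
end
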